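/- arXiv:math/0210366 — 2 statements merged into one kernel-verified Lean document; each statement's English description precedes it below -/
import Mathlib

section
/- Let k ≥ 0. Then the Dunkl kernel satisfies: (1) E_k(x,y) = E_k(y,x) for all x,y ∈ ℝ^N; (2) E_k(λx,y) = E_k(x,λy) for all x,y ∈ ℝ^N and λ ∈ ℝ, and E_k(gx,gy) = E_k(x,y) for all x,y ∈ ℝ^N and g ∈ G; (3) the complex conjugate of E_k(x,y) equals E_k(x, ȳ) for all x ∈ ℝ^N and y ∈ ℂ^N, where ȳ is the componentwise complex conjugate. -/
open scoped RealInnerProductSpace BigOperators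
open MeasureTheory Filter

noncomputable section

/-- Euclidean space ℝ^N. -/
abbrev Vec (N : ℕ) := EuclideanSpace ℝ (Fin N)

/-- The reflection in the hyperplane orthogonal to `α`:
`σ_α x = x − (2⟨α,x⟩/⟨α,α⟩) α`. -/
def reflAt {N : ℕ} (α : Vec N) (x : Vec N) : Vec N :=
  x - ((2 * ⟪α, x⟫) / ⟪α, α⟫) • α

/-- A (reduced) root system, normalized so that `⟨α,α⟩ = 2` for all roots. -/
structure IsRootSystem {N : ℕ} (R : Finset (Vec N)) : Prop where
  ne_zero : ∀ α ∈ R, α ≠ 0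
  neg_mem : ∀ α ∈ R, -α ∈ R
  reduced : ∀ α ∈ R, ∀ β ∈ R, (∃ c : ℝ, β = c • α) → β = α ∨ β = -α
  refl_mem : ∀ α ∈ R, ∀ β ∈ R, reflAt α β ∈ R
  normalized : ∀ α ∈ R, ⟪α, α⟫ = (2 : ℝ)

/-- A positive subsystem `R₊` of a root system `R`: `R` is the disjoint union of
`R₊` and `−R₊`, the two parts being separated by a hyperplane through the origin. -/
structure IsPositiveSubsystem {N : ℕ} (R Rp : Finset (Vec N)) : Prop where
  subset : Rp ⊆ R
  mem_or_neg_mem : ∀ α ∈ R, α ∈ Rp ∨ -α ∈ Rp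
  not_mem_and_neg_mem : ∀ α ∈ R, ¬(α ∈ Rp ∧ -α ∈ Rp)
  separated : ∃ u : Vec N, ∀ α ∈ Rp, 0 < ⟪u, α⟫

/-- The finite reflection group associated with the root system `R`: the subgroup
of the orthogonal group generated by the reflections `σ_α`, `α ∈ R`. -/
def reflGroup {N : ℕ} (R : Finset (Vec N)) : Subgroup (Vec N ≃ₗᵢ[ℝ] Vec N) :=
  Subgroup.closure { g | ∃ α ∈ R, ∀ x, g x = reflAt α x }

/-- A multiplicity function: a `G`-invariant function on the root system. -/
def IsMultiplicity {N : ℕ} (R : Finset (Vec N)) (k : Vec N → ℂ) : Prop :=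
  ∀ g ∈ reflGroup R, ∀ α ∈ R, k (g α) = k α

/-- The Dunkl operator `T_ξ` associated with `R₊` and multiplicity `k`, with
the difference quotient `(f(x) − f(σ_α x))/⟨α,x⟩` interpreted as
`∫₀¹ ∂_α f(x − t⟨α,x⟩α) dt`. -/
def dunklOp {N : ℕ} (k : Vec N → ℂ) (Rp : Finset (Vec N)) (ξ : Vec N)
    (f : Vec N → ℂ) (x : Vec N) : ℂ :=
  fderiv ℝ f x ξ + ∑ α ∈ Rp, k α * ((⟪α, ξ⟫ : ℝ) : ℂ) *
    ∫ t in (0:ℝ)..(1:ℝ), fderiv ℝ f (x - (t * ⟪α, x⟫) • α) α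

/-- The `i`-th standard basis vector of ℝ^N. -/
def stdVec {N : ℕ} (i : Fin N) : Vec N := EuclideanSpace.single i (1 : ℝ)

/-- `T_i = T_{e_i}`. -/
def dunklOpI {N : ℕ} (k : Vec N → ℂ) (Rp : Finset (Vec N)) (i : Fin N) :
    (Vec N → ℂ) → Vec N → ℂ :=
  dunklOp k Rp (stdVec i)

/-- The Dunkl Laplacian `Δ_k = Σ_i T_i²`. -/
def dunklLap {N : ℕ} (k : Vec N → ℂ) (Rp : Finset (Vec N)) (f : Vec N → ℂ) (x : Vec N) : ℂ :=
  ∑ i : Fin N, dunklOpI k Rp i (dunklOpI k Rp i f) x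

/-- The Euclidean Laplacian `Δ = Σ_i ∂_i²`. -/
def euclLap {N : ℕ} (f : Vec N → ℂ) (x : Vec N) : ℂ :=
  ∑ i : Fin N, fderiv ℝ (fun y => fderiv ℝ f y (stdVec i)) x (stdVec i)

/-- Iterates of the Dunkl Laplacian. -/
def dunklLapPow {N : ℕ} (k : Vec N → ℂ) (Rp : Finset (Vec N)) :
    ℕ → (Vec N → ℂ) → Vec N → ℂ
  | 0, f => f
  | n + 1, f => dunklLap k Rp (dunklLapPow k Rp n f)

/-- The operator `e^{−Δ_k/2} = Σ_n (−1)^n (2^n n!)^{−1} Δ_k^n` (a terminating sum on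
each polynomial). -/
def expNegHalfDunklLap {N : ℕ} (k : Vec N → ℂ) (Rp : Finset (Vec N))
    (f : Vec N → ℂ) (x : Vec N) : ℂ :=
  ∑' n : ℕ, ((-1) ^ n / ((2 : ℂ) ^ n * (n.factorial : ℂ))) * dunklLapPow k Rp n f x

/-- The polynomial function on ℝ^N attached to `p ∈ Π = ℂ[ℝ^N]`. -/
def polyFun {N : ℕ} (p : MvPolynomial (Fin N) ℂ) (x : Vec N) : ℂ :=
  MvPolynomial.eval (fun i => ((x i : ℝ) : ℂ)) p

/-- The operator `T^a = Π_i T_i^{a_i}` (the `T_i` commute). -/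
def dunklMonoOp {N : ℕ} (k : Vec N → ℂ) (Rp : Finset (Vec N)) (a : Fin N →₀ ℕ)
    (f : Vec N → ℂ) : Vec N → ℂ :=
  (List.finRange N).foldr (fun i g => (dunklOpI k Rp i)^[a i] g) f

/-- `p(T)q` : substitute the Dunkl operators `T_i` for the coordinates in `p` and
apply the result to `q`. -/
def dunklPolyOp {N : ℕ} (k : Vec N → ℂ) (Rp : Finset (Vec N))
    (p : MvPolynomial (Fin N) ℂ) (f : Vec N → ℂ) (x : Vec N) : ℂ :=
  ∑ a ∈ p.support, p.coeff a * dunklMonoOp k Rp a f x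

/-- The Dunkl pairing `[p,q]_k = (p(T)q)(0)`. -/
def dunklPairing {N : ℕ} (k : Vec N → ℂ) (Rp : Finset (Vec N))
    (p q : MvPolynomial (Fin N) ℂ) : ℂ :=
  dunklPolyOp k Rp p (polyFun q) 0

/-- The weight function `w_k(x) = Π_{α ∈ R₊} |⟨α,x⟩|^{2k(α)}`. -/
def wk {N : ℕ} (k : Vec N → ℝ) (Rp : Finset (Vec N)) (x : Vec N) : ℝ :=
  ∏ α ∈ Rp, |⟪α, x⟫| ^ (2 * k α)

/-- The index `γ = Σ_{α ∈ R₊} k(α)`. -/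
def gammaIdx {N : ℕ} (k : Vec N → ℝ) (Rp : Finset (Vec N)) : ℝ := ∑ α ∈ Rp, k α

/-- The Macdonald–Mehta–Selberg constant `c_k = ∫ e^{−|x|²/2} w_k(x) dx`. -/
def ck {N : ℕ} (k : Vec N → ℝ) (Rp : Finset (Vec N)) : ℝ :=
  ∫ x : Vec N, Real.exp (-‖x‖ ^ 2 / 2) * wk k Rp x

/-- The defining property of the Dunkl kernel `E_k`: for each `y ∈ ℂ^N`,
`x ↦ E_k(x,y)` is the unique real-analytic solution of `T_ξ f = ⟨ξ,y⟩ f` with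
`f(0) = 1`. -/
def IsDunklKernel {N : ℕ} (k : Vec N → ℂ) (Rp : Finset (Vec N))
    (E : Vec N → (Fin N → ℂ) → ℂ) : Prop :=
  ∀ y : Fin N → ℂ,
    AnalyticOn ℝ (fun x => E x y) Set.univ ∧ E 0 y = 1 ∧
      ∀ ξ : Vec N, ∀ x : Vec N,
        dunklOp k Rp ξ (fun z => E z y) x = (∑ i, ((ξ i : ℝ) : ℂ) * y i) * E x y

/-- The directional derivative `∂_ξ` on polynomials. -/
def pderivDir {N : ℕ} (ξ : Vec N) (p : MvPolynomial (Fin N) ℂ) : MvPolynomial (Fin N) ℂ :=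
  ∑ i : Fin N, ((ξ i : ℝ) : ℂ) • MvPolynomial.pderiv i p

/-- The defining properties of Dunkl's intertwining operator `V_k`:
a linear isomorphism of `Π` with `V_k(𝒫_n) = 𝒫_n`, `V_k = id` on constants, and
`T_ξ ∘ V_k = V_k ∘ ∂_ξ`. -/
def IsIntertwiner {N : ℕ} (k : Vec N → ℂ) (Rp : Finset (Vec N))
    (V : MvPolynomial (Fin N) ℂ ≃ₗ[ℂ] MvPolynomial (Fin N) ℂ) : Prop :=
  (∀ n : ℕ, Submodule.map (V : MvPolynomial (Fin N) ℂ →ₗ[ℂ] MvPolynomial (Fin N) ℂ)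
      (MvPolynomial.homogeneousSubmodule (Fin N) ℂ n)
      = MvPolynomial.homogeneousSubmodule (Fin N) ℂ n) ∧
  (∀ c : ℂ, V (MvPolynomial.C c) = MvPolynomial.C c) ∧
  (∀ ξ : Vec N, ∀ p : MvPolynomial (Fin N) ℂ, ∀ x : Vec N,
      dunklOp k Rp ξ (polyFun (V p)) x = polyFun (V (pderivDir ξ p)) x)

/-- The open Weyl chamber attached to `R₊`. -/
def chamber {N : ℕ} (Rp : Finset (Vec N)) : Set (Vec N) := {x | ∀ α ∈ Rp, 0 < ⟪α, x⟫}

/-- The cone `C_δ = {x ∈ C : ⟨α,x⟩ > δ|x| for all α ∈ R₊}`. -/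
def chamberCone {N : ℕ} (Rp : Finset (Vec N)) (δ : ℝ) : Set (Vec N) :=
  {x | ∀ α ∈ Rp, δ * ‖x‖ < ⟪α, x⟫}

/-- The weighted measure `w_k(x) dx`. -/
def muW {N : ℕ} (k : Vec N → ℝ) (Rp : Finset (Vec N)) : Measure (Vec N) :=
  volume.withDensity (fun x => ENNReal.ofReal (wk k Rp x))

/-- The probability measure `dm_k = c_k^{−1} e^{−|x|²/2} w_k(x) dx`. -/
def muM {N : ℕ} (k : Vec N → ℝ) (Rp : Finset (Vec N)) : Measure (Vec N) :=
  volume.withDensity (fun x => ENNReal.ofReal ((ck k Rp)⁻¹ * Real.exp (-‖x‖ ^ 2 / 2) * wk k Rp x))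

/-- The Dunkl transform `f̂^k(ξ) = c_k^{−1} ∫ f(x) E_k(x,−iξ) w_k(x) dx`. -/
def dunklTransform {N : ℕ} (k : Vec N → ℝ) (Rp : Finset (Vec N))
    (E : Vec N → (Fin N → ℂ) → ℂ) (f : Vec N → ℂ) (ξ : Vec N) : ℂ :=
  (((ck k Rp : ℝ) : ℂ))⁻¹ *
    ∫ x : Vec N, f x * E x (fun i => -Complex.I * ((ξ i : ℝ) : ℂ)) * ((wk k Rp x : ℝ) : ℂ)

/-- `μ` is a representing probability measure at `x` for the intertwining operator `V`:
a probability measure supported in the convex hull of the `G`-orbit of `x` with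
`V p (x) = ∫ p dμ` for all polynomials `p`. -/
def IsRepMeasure {N : ℕ} (R : Finset (Vec N))
    (V : MvPolynomial (Fin N) ℂ ≃ₗ[ℂ] MvPolynomial (Fin N) ℂ)
    (x : Vec N) (μ : Measure (Vec N)) : Prop :=
  IsProbabilityMeasure μ ∧
  μ ((convexHull ℝ {z : Vec N | ∃ g ∈ reflGroup R, z = g x})ᶜ) = 0 ∧
  ∀ p : MvPolynomial (Fin N) ℂ, polyFun (V p) x = ∫ ξ, polyFun p ξ ∂μ

/-- The elements of `L²(μ)` represented by a function in `S`. -/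
def lpOf {N : ℕ} (μ : Measure (Vec N)) (S : Set (Vec N → ℂ)) : Set (Lp ℂ 2 μ) :=
  {F | ∃ f ∈ S, (F : Vec N → ℂ) =ᵐ[μ] f}

/-- Iterated partial derivatives `∂_y^m` of a function of `y ∈ ℂ^N`. -/
def iterPderivC {N : ℕ} (m : Fin N → ℕ) (F : (Fin N → ℂ) → ℂ) : (Fin N → ℂ) → ℂ :=
  (List.finRange N).foldr
    (fun i G =>
      (fun (H : (Fin N → ℂ) → ℂ) (y : Fin N → ℂ) => fderiv ℂ H y (Pi.single i 1))^[m i] G) F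

end

/-!
Every `E(·, y)` solves the first-order equation obtained from `T_x f(x) = ⟨x, y⟩ f(x)`, namely
`∂_x f(x) + ∑_{α ∈ R₊} k(α) (f(x) − f(σ_α x)) = ⟨x, y⟩ f(x)`. Differentiating it `n + 1` times
along a ray gives, for the diagonal Taylor coefficients `u_n(z) = D^n f(0)(z, …, z)`,
`(n + 1 + γ) u_{n+1}(z) = ∑ k(α) u_{n+1}(σ_α z) + (n + 1) ⟨z, y⟩ u_n(z)` with `γ = ∑ k(α)`.
As `k ≥ 0`, the averaging on the right contracts by `γ / (n + 1 + γ) < 1`, so an analytic solution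
is determined by `f(0)`. Homogeneity, `G`-invariance and conjugation follow, since the transformed
kernels solve the transformed equations. For the symmetry, let
`u_n(a, b) = D^n E(·, b)(0)(a, …, a)`. `G`-invariance moves a reflection from one argument of `u_n` to the other, so, by induction on `n`,
`u_{n+1}(a, b) − u_{n+1}(b, a)` satisfies the same contracting recursion on the `G`-orbit of `a`
and vanishes.
-/

variable {N : ℕ}

section Reflections

theorem reflection_orthogonal_span_singleton (α x : Vec N) :
    (ℝ ∙ α)ᗮ.reflection x = reflAt α x := by
  rw [Submodule.reflection_orthogonal_apply, Submodule.reflection_singleton_apply, reflAt,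
    real_inner_self_eq_norm_sq]
  simp only [RCLike.ofReal_real_eq_id, id]
  module

theorem reflAt_reflAt (α x : Vec N) : reflAt α (reflAt α x) = x := by
  simp only [← reflection_orthogonal_span_singleton, Submodule.reflection_reflection]

theorem norm_reflAt (α x : Vec N) : ‖reflAt α x‖ = ‖x‖ := by
  rw [← reflection_orthogonal_span_singleton, LinearIsometryEquiv.norm_map]

theorem reflAt_smul (α : Vec N) (r : ℝ) (x : Vec N) : reflAt α (r • x) = r • reflAt α x := by
  simp only [← reflection_orthogonal_span_singleton, map_smul]

theorem reflAt_neg (α x : Vec N) : reflAt (-α) x = reflAt α x := by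
  simp only [reflAt, inner_neg_left, inner_neg_right, neg_neg, smul_neg, mul_neg, neg_div, neg_smul]

theorem reflAt_of_inner_self_eq_two {α : Vec N} (hα : ⟪α, α⟫ = 2) (x : Vec N) :
    reflAt α x = x - ⟪α, x⟫ • α := by
  rw [reflAt, hα, mul_div_cancel_left₀ _ two_ne_zero]

theorem LinearIsometryEquiv.map_reflAt (g : Vec N ≃ₗᵢ[ℝ] Vec N) (α x : Vec N) :
    g (reflAt α x) = reflAt (g α) (g x) := by
  simp only [reflAt, map_sub, map_smul, LinearIsometryEquiv.inner_map_map]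

end Reflections

section RootSystems

variable {R Rp : Finset (Vec N)}

theorem reflection_mem_reflGroup {α : Vec N} (hα : α ∈ R) :
    (ℝ ∙ α)ᗮ.reflection ∈ reflGroup R :=
  Subgroup.subset_closure ⟨α, hα, reflection_orthogonal_span_singleton α⟩

theorem IsRootSystem.map_mem (hR : IsRootSystem R) {g : Vec N ≃ₗᵢ[ℝ] Vec N}
    (hg : g ∈ reflGroup R) {α : Vec N} (hα : α ∈ R) : g α ∈ R := by
  induction hg using Subgroup.closure_induction generalizing α with
  | mem g hg =>
    obtain ⟨β, hβ, hgβ⟩ := hg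
    exact hgβ α ▸ hR.refl_mem β hβ α hα
  | one => exact hα
  | mul g h _ _ hg hh => exact hg (hh hα)
  | inv g _ hg =>
    -- `g` permutes the finite set `R`, hence so does `g⁻¹`.
    obtain ⟨β, hβ, rfl⟩ := Finset.surj_on_of_inj_on_of_card_le (fun β _ => g β)
      (fun β hβ => hg hβ) (fun _ _ _ _ h => g.injective h) le_rfl α hα
    simpa using hβ

theorem IsMultiplicity.apply_neg {k : Vec N → ℂ} (hk : IsMultiplicity R k) {α : Vec N}
    (hα : α ∈ R) : k (-α) = k α := by
  simpa [Submodule.reflection_orthogonalComplement_singleton_eq_neg] using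
    hk _ (reflection_mem_reflGroup hα) α hα

theorem IsPositiveSubsystem.sum_eq_two_mul (hR : IsRootSystem R) (hRp : IsPositiveSubsystem R Rp)
    {S : Vec N → ℂ} (hS : ∀ α ∈ R, S (-α) = S α) :
    ∑ α ∈ R, S α = 2 * ∑ α ∈ Rp, S α := by
  classical
  have hR_eq : R = Rp ∪ Rp.image Neg.neg := by
    ext α
    simp only [Finset.mem_union, Finset.mem_image]
    refine ⟨fun hα => (hRp.mem_or_neg_mem α hα).imp id fun h => ⟨-α, h, neg_neg α⟩, ?_⟩
    rintro (h | ⟨β, hβ, rfl⟩)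
    exacts [hRp.subset h, hR.neg_mem β (hRp.subset hβ)]
  have hdisj : Disjoint Rp (Rp.image Neg.neg) := by
    simp only [Finset.disjoint_left, Finset.mem_image, not_exists, not_and]
    rintro _ hβ α hα rfl
    exact hRp.not_mem_and_neg_mem α (hRp.subset hα) ⟨hα, hβ⟩
  rw [hR_eq, Finset.sum_union hdisj, Finset.sum_image fun _ _ _ _ h => neg_injective h,
    Finset.sum_congr rfl fun α hα => hS α (hRp.subset hα), two_mul]

theorem IsPositiveSubsystem.sum_comp_eq (hR : IsRootSystem R) (hRp : IsPositiveSubsystem R Rp)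
    {S : Vec N → ℂ} (hS : ∀ α ∈ R, S (-α) = S α) {g : Vec N ≃ₗᵢ[ℝ] Vec N}
    (hg : g ∈ reflGroup R) :
    ∑ α ∈ Rp, S (g α) = ∑ α ∈ Rp, S α := by
  have hSg : ∀ α ∈ R, S (g (-α)) = S (g α) := fun α hα => by
    rw [map_neg, hS _ (hR.map_mem hg hα)]
  have hperm : ∑ α ∈ R, S (g α) = ∑ α ∈ R, S α :=
    Finset.sum_nbij' g g.symm (fun α hα => hR.map_mem hg hα)
      (fun α hα => hR.map_mem (inv_mem hg) hα) (fun α _ => by simp) (fun α _ => by simp)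
      fun _ _ => rfl
  rw [← mul_right_inj' (two_ne_zero (α := ℂ)), ← hRp.sum_eq_two_mul hR hSg,
    ← hRp.sum_eq_two_mul hR hS, hperm]

end RootSystems

/-- `ofRealVec ξ ⬝ᵥ y` is the bilinear pairing `⟨ξ, y⟩` of `ξ ∈ ℝ^N` and `y ∈ ℂ^N`. -/
def ofRealVec (x : Vec N) : Fin N → ℂ := fun i => (x i : ℂ)

section OfRealVec

theorem ofRealVec_dotProduct_ofRealVec (x y : Vec N) :
    ofRealVec x ⬝ᵥ ofRealVec y = (⟪x, y⟫ : ℂ) := by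
  simp [ofRealVec, dotProduct, PiLp.inner_apply, mul_comm]

theorem ofRealVec_smul (r : ℝ) (x : Vec N) : ofRealVec (r • x) = (r : ℂ) • ofRealVec x := by
  ext i
  simp [ofRealVec]

end OfRealVec

/-- Dunkl's equation `T_ξ f = ⟨ξ, y⟩ f` contracted with `ξ = x`: the difference quotients
then lose their denominators. -/
def IsEulerSolution (k : Vec N → ℝ) (Rp : Finset (Vec N)) (y : Fin N → ℂ)
    (f : Vec N → ℂ) : Prop :=
  ∀ x, fderiv ℝ f x x + ∑ α ∈ Rp, (k α : ℂ) * (f x - f (reflAt α x)) = (ofRealVec x ⬝ᵥ y) * f x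

section EulerSolution

variable {k : Vec N → ℝ} {R Rp : Finset (Vec N)} {y : Fin N → ℂ} {f : Vec N → ℂ}

theorem inner_mul_integral_fderiv_eq_sub_reflAt (hf : ContDiff ℝ 1 f) {α : Vec N}
    (hα : ⟪α, α⟫ = 2) (x : Vec N) :
    (⟪α, x⟫ : ℂ) * ∫ t in (0:ℝ)..1, fderiv ℝ f (x - (t * ⟪α, x⟫) • α) α
      = f x - f (reflAt α x) := by
  have hftc := map_add_eq_sum_add_integral_iteratedFDeriv (n := 0) (x := x)
    (y := -(⟪α, x⟫ • α)) fun t _ => hf.contDiffAt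
  simp only [zero_add, Finset.range_one, Finset.sum_singleton, Nat.factorial_zero, Nat.cast_one,
    inv_one, Complex.ofReal_one, pow_zero, one_smul, Nat.reduceAdd, iteratedFDeriv_zero_apply,
    iteratedFDeriv_one_apply, smul_neg, smul_smul, ← sub_eq_add_neg, map_neg, map_smul,
    Complex.real_smul, intervalIntegral.integral_neg, intervalIntegral.integral_const_mul] at hftc
  rw [reflAt_of_inner_self_eq_two hα, hftc]
  ring

theorem IsDunklKernel.isEulerSolution {E : Vec N → (Fin N → ℂ) → ℂ}
    (hE : IsDunklKernel (fun α => (k α : ℂ)) Rp E) (hRp : ∀ α ∈ Rp, ⟪α, α⟫ = 2)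
    (y : Fin N → ℂ) : IsEulerSolution k Rp y (E · y) := by
  intro x
  have hf : ContDiff ℝ 1 (E · y) := (analyticOn_univ.mp (hE y).1).contDiff
  refine Eq.trans ?_ ((hE y).2.2 x x)
  rw [dunklOp]
  congr 1
  refine Finset.sum_congr rfl fun α hα => ?_
  rw [mul_assoc, inner_mul_integral_fderiv_eq_sub_reflAt hf (hRp α hα)]

theorem IsEulerSolution.comp_smul (h : IsEulerSolution k Rp y f) (r : ℝ) :
    IsEulerSolution k Rp ((r : ℂ) • y) (fun x => f (r • x)) := by
  intro x
  have hd : fderiv ℝ (fun x => f (r • x)) x x = fderiv ℝ f (r • x) (r • x) := by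
    rw [fderiv_comp_smul, smul_apply, map_smul]
  simp only [hd, ← reflAt_smul, h (r • x), ofRealVec_smul, smul_dotProduct, dotProduct_smul]

theorem IsEulerSolution.comp_reflGroup (hR : IsRootSystem R) (hRp : IsPositiveSubsystem R Rp)
    (hk : IsMultiplicity R (fun α => (k α : ℂ))) {g : Vec N ≃ₗᵢ[ℝ] Vec N}
    (hg : g ∈ reflGroup R) {y : Vec N}
    (h : IsEulerSolution k Rp (ofRealVec (g y)) f) :
    IsEulerSolution k Rp (ofRealVec y) (fun x => f (g x)) := by
  intro x
  have hd : fderiv ℝ (fun x => f (g x)) x x = fderiv ℝ f (g x) (g x) := by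
    change fderiv ℝ (f ∘ g.toContinuousLinearEquiv) x x = _
    rw [ContinuousLinearEquiv.comp_right_fderiv]
    rfl
  have hsum : ∑ α ∈ Rp, (k α : ℂ) * (f (g x) - f (g (reflAt α x)))
      = ∑ α ∈ Rp, (k α : ℂ) * (f (g x) - f (reflAt α (g x))) := by
    have hreindex := hRp.sum_comp_eq hR (S := fun β => (k β : ℂ) * (f (g x) - f (reflAt β (g x))))
      (fun β hβ => by rw [hk.apply_neg hβ, reflAt_neg]) hg
    rw [← hreindex]
    refine Finset.sum_congr rfl fun α hα => ?_
    have hkα : (k (g α) : ℂ) = k α := hk g hg α (hRp.subset hα)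
    rw [g.map_reflAt, hkα]
  rw [hd, hsum, h (g x), ofRealVec_dotProduct_ofRealVec, ofRealVec_dotProduct_ofRealVec,
    LinearIsometryEquiv.inner_map_map]

theorem IsEulerSolution.conj (h : IsEulerSolution k Rp y f) :
    IsEulerSolution k Rp (fun i => starRingEnd ℂ (y i)) (fun x => starRingEnd ℂ (f x)) := by
  intro x
  have hd : fderiv ℝ (fun x => starRingEnd ℂ (f x)) x x = starRingEnd ℂ (fderiv ℝ f x x) := by
    change fderiv ℝ (Complex.conjLIE ∘ f) x x = _
    rw [LinearIsometryEquiv.comp_fderiv]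
    rfl
  have := congrArg (starRingEnd ℂ) (h x)
  simpa [hd, ofRealVec, dotProduct, map_sum] using this

end EulerSolution

open scoped ContDiff

section RayDerivatives

variable {E F : Type*} [NormedAddCommGroup E] [NormedSpace ℝ E] [NormedAddCommGroup F]
  [NormedSpace ℝ F] {f g : E → F}

noncomputable def rayIteratedDeriv (f : E → F) (n : ℕ) (z : E) : F :=
  iteratedDeriv n (fun r : ℝ => f (r • z)) 0

theorem rayIteratedDeriv_zero (f : E → F) (z : E) : rayIteratedDeriv f 0 z = f 0 := by
  simp [rayIteratedDeriv]

theorem rayIteratedDeriv_eq_iteratedFDeriv {n : ℕ} (hf : ContDiff ℝ n f) (z : E) :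
    rayIteratedDeriv f n z = iteratedFDeriv ℝ n f 0 (fun _ => z) := by
  have hray : (fun r : ℝ => f (r • z)) = f ∘ ContinuousLinearMap.toSpanSingleton ℝ z := by
    ext r
    simp
  rw [rayIteratedDeriv, hray, iteratedDeriv_eq_iteratedFDeriv,
    ContinuousLinearMap.iteratedFDeriv_comp_right _ hf _ le_rfl]
  simp

theorem norm_rayIteratedDeriv_le {n : ℕ} (hf : ContDiff ℝ n f) (z : E) :
    ‖rayIteratedDeriv f n z‖ ≤ ‖iteratedFDeriv ℝ n f 0‖ * ‖z‖ ^ n := by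
  rw [rayIteratedDeriv_eq_iteratedFDeriv hf]
  simpa using (iteratedFDeriv ℝ n f 0).le_opNorm fun _ => z

theorem AnalyticOnNhd.eq_of_iteratedDeriv_eq [CompleteSpace F] {φ ψ : ℝ → F}
    (hφ : AnalyticOnNhd ℝ φ Set.univ) (hψ : AnalyticOnNhd ℝ ψ Set.univ) {z₀ : ℝ}
    (h : ∀ n, iteratedDeriv n φ z₀ = iteratedDeriv n ψ z₀) : φ = ψ := by
  have hd : AnalyticOnNhd ℝ (φ - ψ) Set.univ := hφ.sub hψ
  have horder : analyticOrderAt (φ - ψ) z₀ = ⊤ := by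
    refine ENat.eq_top_iff_forall_ge.mpr fun n => ?_
    rw [natCast_le_analyticOrderAt_iff_iteratedDeriv_eq_zero (hd z₀ trivial)]
    intro i _
    rw [iteratedDeriv_sub (hφ z₀ trivial).contDiffAt (hψ z₀ trivial).contDiffAt, h, sub_self]
  have hzero := hd.eqOn_zero_of_preconnected_of_eventuallyEq_zero isPreconnected_univ trivial
    (analyticOrderAt_eq_top.mp horder)
  exact sub_eq_zero.mp (funext fun r => hzero trivial)

theorem apply_eq_of_rayIteratedDeriv_eq [CompleteSpace F] (hf : AnalyticOnNhd ℝ f Set.univ)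
    (hg : AnalyticOnNhd ℝ g Set.univ) {x y : E}
    (h : ∀ n, rayIteratedDeriv f n x = rayIteratedDeriv g n y) : f x = g y := by
  have hray : ∀ {f : E → F} (z : E), AnalyticOnNhd ℝ f Set.univ →
      AnalyticOnNhd ℝ (fun r : ℝ => f (r • z)) Set.univ := fun z hf =>
    hf.comp ((ContinuousLinearMap.toSpanSingleton ℝ z).analyticOnNhd _) fun _ _ => trivial
  simpa using congrFun ((hray x hf).eq_of_iteratedDeriv_eq (hray y hg) h) 1

end RayDerivatives

theorem iteratedDeriv_succ_ofReal_mul {g : ℝ → ℂ} {n : ℕ} (hg : ContDiffAt ℝ (n + 1 : ℕ) g 0) :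
    iteratedDeriv (n + 1) (fun r : ℝ => (r : ℂ) * g r) 0 = (n + 1) * iteratedDeriv n g 0 := by
  have hid : ∀ i : ℕ, iteratedDeriv i (fun r : ℝ => (r : ℂ)) 0 = if i = 1 then 1 else 0 := by
    intro i
    have : (fun r : ℝ => (r : ℂ)) = fun r : ℝ => r • (1 : ℂ) := by ext r; simp
    rw [this, iteratedDeriv_smul_const contDiffAt_id, iteratedDeriv_fun_id_zero]
    split_ifs <;> simp
  have hof : ContDiffAt ℝ (n + 1 : ℕ) (fun r : ℝ => (r : ℂ)) 0 :=
    Complex.ofRealCLM.contDiff.contDiffAt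
  rw [iteratedDeriv_fun_mul hof hg,
    Finset.sum_eq_single 1 (fun i _ hi => by simp [hid, hi]) (by simp)]
  simp [hid]

theorem eq_zero_of_mul_eq_sum_comp {X ι : Type*} {s : Finset ι} {k : ι → ℝ}
    (hk : ∀ i ∈ s, 0 ≤ k i) {c M : ℝ} (hc : 0 < c) {σ : ι → X → X} {S : Set X}
    (hS : ∀ w ∈ S, ∀ i ∈ s, σ i w ∈ S) {u : X → ℂ} (hM : ∀ w ∈ S, ‖u w‖ ≤ M)
    (hu : ∀ w ∈ S, ((c + ∑ i ∈ s, k i : ℝ) : ℂ) * u w = ∑ i ∈ s, (k i : ℂ) * u (σ i w))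
    {w : X} (hw : w ∈ S) : u w = 0 := by
  set K := ∑ i ∈ s, k i
  have hK : 0 ≤ K := Finset.sum_nonneg hk
  have hcK : 0 < c + K := by linarith
  have hq : K / (c + K) < 1 := (div_lt_one hcK).mpr (by linarith)
  have hbound : ∀ m : ℕ, ∀ w ∈ S, ‖u w‖ ≤ (K / (c + K)) ^ m * M := by
    intro m
    induction m with
    | zero => simpa using hM
    | succ m ih =>
      intro w hw
      have hstep : (c + K) * ‖u w‖ ≤ K * ((K / (c + K)) ^ m * M) := calc
        (c + K) * ‖u w‖ = ‖((c + K : ℝ) : ℂ) * u w‖ := by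
          rw [norm_mul, Complex.norm_real, Real.norm_of_nonneg hcK.le]
        _ = ‖∑ i ∈ s, (k i : ℂ) * u (σ i w)‖ := by rw [hu w hw]
        _ ≤ ∑ i ∈ s, k i * ((K / (c + K)) ^ m * M) := by
          refine norm_sum_le_of_le s fun i hi => ?_
          rw [norm_mul, Complex.norm_real, Real.norm_of_nonneg (hk i hi)]
          exact mul_le_mul_of_nonneg_left (ih _ (hS w hw i hi)) (hk i hi)
        _ = K * ((K / (c + K)) ^ m * M) := by rw [Finset.sum_mul]
      calc ‖u w‖ ≤ K * ((K / (c + K)) ^ m * M) / (c + K) := (le_div_iff₀' hcK).mpr hstep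
        _ = (K / (c + K)) ^ (m + 1) * M := by ring
  have hlim : Tendsto (fun m : ℕ => (K / (c + K)) ^ m * M) atTop (nhds 0) := by
    simpa using (tendsto_pow_atTop_nhds_zero_of_lt_one (by positivity) hq).mul_const M
  exact norm_le_zero_iff.mp (ge_of_tendsto' hlim fun m => hbound m w hw)

section Uniqueness

variable {k : Vec N → ℝ} {Rp : Finset (Vec N)} {y : Fin N → ℂ} {f g : Vec N → ℂ}

theorem IsEulerSolution.along_ray (hf : Differentiable ℝ f) (h : IsEulerSolution k Rp y f)
    (z : Vec N) (r : ℝ) :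
    (r : ℂ) * deriv (fun s : ℝ => f (s • z)) r
      + ∑ α ∈ Rp, (k α : ℂ) * (f (r • z) - f (r • reflAt α z))
      = (r : ℂ) * (ofRealVec z ⬝ᵥ y * f (r • z)) := by
  have hchain : HasDerivAt (fun s : ℝ => f (s • z)) (fderiv ℝ f (r • z) z) r := by
    simpa [Function.comp_def] using
      (hf (r • z)).hasFDerivAt.comp_hasDerivAt r ((hasDerivAt_id r).smul_const z)
  have hderiv : (r : ℂ) * deriv (fun s : ℝ => f (s • z)) r = fderiv ℝ f (r • z) (r • z) := by
    rw [hchain.deriv, ← Complex.real_smul, ← map_smul]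
  simpa [hderiv, reflAt_smul, ofRealVec_smul, smul_dotProduct, mul_assoc] using h (r • z)

theorem IsEulerSolution.rayIteratedDeriv_succ (hf : ContDiff ℝ ∞ f)
    (h : IsEulerSolution k Rp y f) (n : ℕ) (z : Vec N) :
    ((n + 1 + ∑ α ∈ Rp, k α : ℝ) : ℂ) * rayIteratedDeriv f (n + 1) z
      = ∑ α ∈ Rp, (k α : ℂ) * rayIteratedDeriv f (n + 1) (reflAt α z)
        + (n + 1) * (ofRealVec z ⬝ᵥ y * rayIteratedDeriv f n z) := by
  set φ : Vec N → ℝ → ℂ := fun w r => f (r • w)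
  have hφ : ∀ w, ContDiff ℝ ∞ (φ w) := fun w => hf.comp (contDiff_id.smul contDiff_const)
  have hφ' : ContDiff ℝ ∞ (deriv (φ z)) := (contDiff_infty_iff_deriv.mp (hφ z)).2
  have hof : ContDiff ℝ ∞ (fun r : ℝ => (r : ℂ)) := Complex.ofRealCLM.contDiff
  have hsm : ∀ {F : ℝ → ℂ} (m : ℕ), ContDiff ℝ ∞ F → ContDiffAt ℝ m F 0 :=
    fun m hF => (hF.of_le (by exact_mod_cast le_top)).contDiffAt
  have hsum : iteratedDeriv (n + 1)
      (fun r => ∑ α ∈ Rp, (k α : ℂ) * (φ z r - φ (reflAt α z) r)) 0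
      = ∑ α ∈ Rp, (k α : ℂ) * (rayIteratedDeriv f (n + 1) z
          - rayIteratedDeriv f (n + 1) (reflAt α z)) := by
    rw [iteratedDeriv_fun_sum fun α _ => hsm _ (by fun_prop)]
    refine Finset.sum_congr rfl fun α _ => ?_
    rw [iteratedDeriv_const_mul _ (hsm _ (by fun_prop)),
      iteratedDeriv_fun_sub (hsm _ (hφ z)) (hsm _ (hφ _))]
    rfl
  have hlhs : iteratedDeriv (n + 1) (fun r : ℝ => (r : ℂ) * deriv (φ z) r) 0
      = (n + 1) * rayIteratedDeriv f (n + 1) z := by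
    rw [iteratedDeriv_succ_ofReal_mul (hsm _ hφ'), ← iteratedDeriv_succ']
    rfl
  have hrhs : iteratedDeriv (n + 1) (fun r : ℝ => (r : ℂ) * (ofRealVec z ⬝ᵥ y * φ z r)) 0
      = (n + 1) * (ofRealVec z ⬝ᵥ y * rayIteratedDeriv f n z) := by
    rw [iteratedDeriv_succ_ofReal_mul (hsm _ (by fun_prop)),
      iteratedDeriv_const_mul _ (hsm _ (hφ z))]
    rfl
  have hcoeff := congrArg (fun F => iteratedDeriv (n + 1) F 0)
    (funext (h.along_ray (hf.differentiable (by simp)) z))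
  rw [iteratedDeriv_fun_add (hsm _ (by fun_prop)) (hsm _ (by fun_prop)), hlhs, hsum, hrhs] at hcoeff
  simp only [mul_sub, Finset.sum_sub_distrib, ← Finset.sum_mul] at hcoeff
  push_cast
  linear_combination hcoeff

theorem IsEulerSolution.rayIteratedDeriv_eq (hk : ∀ α ∈ Rp, 0 ≤ k α) (hf : ContDiff ℝ ∞ f)
    (hg : ContDiff ℝ ∞ g) (sf : IsEulerSolution k Rp y f) (sg : IsEulerSolution k Rp y g)
    (h0 : f 0 = g 0) (n : ℕ) (z : Vec N) :
    rayIteratedDeriv f n z = rayIteratedDeriv g n z := by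
  induction n generalizing z with
  | zero => rw [rayIteratedDeriv_zero, rayIteratedDeriv_zero, h0]
  | succ n ih =>
    have hle : ((n + 1 : ℕ) : WithTop ℕ∞) ≤ ∞ := by exact_mod_cast le_top
    refine sub_eq_zero.mp <| eq_zero_of_mul_eq_sum_comp hk (c := n + 1) (by positivity)
      (σ := reflAt) (S := Metric.sphere 0 ‖z‖) (fun w hw α _ => by simpa [norm_reflAt] using hw)
      (u := fun w => rayIteratedDeriv f (n + 1) w - rayIteratedDeriv g (n + 1) w)
      (M := ‖iteratedFDeriv ℝ (n + 1) f 0‖ * ‖z‖ ^ (n + 1)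
        + ‖iteratedFDeriv ℝ (n + 1) g 0‖ * ‖z‖ ^ (n + 1)) ?_ ?_ (by simp)
    · intro w hw
      rw [mem_sphere_zero_iff_norm] at hw
      refine (norm_sub_le _ _).trans (add_le_add ?_ ?_) <;> rw [← hw]
      exacts [norm_rayIteratedDeriv_le (hf.of_le hle) w, norm_rayIteratedDeriv_le (hg.of_le hle) w]
    · intro w _
      simp only [mul_sub, sf.rayIteratedDeriv_succ hf, sg.rayIteratedDeriv_succ hg, ih,
        Finset.sum_sub_distrib]
      ring

theorem IsEulerSolution.eq_of_map_zero_eq (hk : ∀ α ∈ Rp, 0 ≤ k α)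
    (hf : AnalyticOnNhd ℝ f Set.univ) (hg : AnalyticOnNhd ℝ g Set.univ)
    (sf : IsEulerSolution k Rp y f) (sg : IsEulerSolution k Rp y g) (h0 : f 0 = g 0) : f = g :=
  funext fun x => apply_eq_of_rayIteratedDeriv_eq hf hg
    (sf.rayIteratedDeriv_eq hk hf.contDiff hg.contDiff sg h0 · x)

end Uniqueness

section Symmetry

variable {k : Vec N → ℝ} {R Rp : Finset (Vec N)} {K : Vec N → Vec N → ℂ}

theorem rayIteratedDeriv_map_of_invariant (hK : ∀ x y, ∀ g ∈ reflGroup R, K (g x) (g y) = K x y)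
    {g : Vec N ≃ₗᵢ[ℝ] Vec N} (hg : g ∈ reflGroup R) (n : ℕ) (a b : Vec N) :
    rayIteratedDeriv (K · (g b)) n (g a) = rayIteratedDeriv (K · b) n a := by
  simp only [rayIteratedDeriv, ← map_smul, hK _ _ g hg]

theorem rayIteratedDeriv_symm_of_invariant (hk : ∀ α ∈ Rp, 0 ≤ k α) (hRpR : Rp ⊆ R)
    (hKsmooth : ∀ y, ContDiff ℝ ∞ (K · y)) (hK0 : ∀ y, K 0 y = 1)
    (hKeuler : ∀ y, IsEulerSolution k Rp (ofRealVec y) (K · y))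
    (hK : ∀ x y, ∀ g ∈ reflGroup R, K (g x) (g y) = K x y) (n : ℕ) (a b : Vec N) :
    rayIteratedDeriv (K · b) n a = rayIteratedDeriv (K · a) n b := by
  induction n generalizing a b with
  | zero => rw [rayIteratedDeriv_zero, rayIteratedDeriv_zero, hK0, hK0]
  | succ n ih =>
    have hle : ((n + 1 : ℕ) : WithTop ℕ∞) ≤ ∞ := by exact_mod_cast le_top
    have hrefl : ∀ α ∈ Rp, ∀ a b, rayIteratedDeriv (K · b) (n + 1) (reflAt α a)
        = rayIteratedDeriv (K · (reflAt α b)) (n + 1) a := by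
      intro α hα a b
      rw [← rayIteratedDeriv_map_of_invariant hK (reflection_mem_reflGroup (hRpR hα)) (n + 1) a]
      simp only [reflection_orthogonal_span_singleton, reflAt_reflAt]
    refine sub_eq_zero.mp <| eq_zero_of_mul_eq_sum_comp hk (c := n + 1) (by positivity)
      (σ := reflAt) (S := {w | ∃ g ∈ reflGroup R, g a = w})
      (u := fun w => rayIteratedDeriv (K · b) (n + 1) w - rayIteratedDeriv (K · w) (n + 1) b)
      (M := ‖iteratedFDeriv ℝ (n + 1) (K · b) 0‖ * ‖a‖ ^ (n + 1)
        + ‖iteratedFDeriv ℝ (n + 1) (K · a) 0‖ * ‖b‖ ^ (n + 1)) ?_ ?_ ?_ ⟨1, one_mem _, rfl⟩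
    · rintro _ ⟨g, hg, rfl⟩ α hα
      exact ⟨_ * g, mul_mem (reflection_mem_reflGroup (hRpR hα)) hg,
        reflection_orthogonal_span_singleton α (g a)⟩
    · rintro _ ⟨g, hg, rfl⟩
      have hswap : rayIteratedDeriv (K · (g a)) (n + 1) b
          = rayIteratedDeriv (K · a) (n + 1) (g⁻¹ b) := by
        rw [← rayIteratedDeriv_map_of_invariant hK hg (n + 1) (g⁻¹ b) a]
        simp
      refine (norm_sub_le _ _).trans (add_le_add ?_ ?_)
      · simpa using norm_rayIteratedDeriv_le ((hKsmooth b).of_le hle) (g a)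
      · simpa [hswap] using norm_rayIteratedDeriv_le ((hKsmooth a).of_le hle) (g⁻¹ b)
    · intro w _
      have hsum := Finset.sum_congr rfl fun α hα => congrArg ((k α : ℂ) * ·) (hrefl α hα b w)
      simp only [mul_sub, (hKeuler b).rayIteratedDeriv_succ (hKsmooth b),
        (hKeuler w).rayIteratedDeriv_succ (hKsmooth w), hsum, ofRealVec_dotProduct_ofRealVec,
        real_inner_comm b w, ih w b, Finset.sum_sub_distrib]
      ring

theorem symm_of_invariant (hk : ∀ α ∈ Rp, 0 ≤ k α) (hRpR : Rp ⊆ R)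
    (hKan : ∀ y, AnalyticOnNhd ℝ (K · y) Set.univ) (hK0 : ∀ y, K 0 y = 1)
    (hKeuler : ∀ y, IsEulerSolution k Rp (ofRealVec y) (K · y))
    (hK : ∀ x y, ∀ g ∈ reflGroup R, K (g x) (g y) = K x y) (x y : Vec N) : K x y = K y x :=
  apply_eq_of_rayIteratedDeriv_eq (hKan y) (hKan x)
    (rayIteratedDeriv_symm_of_invariant hk hRpR (fun y => (hKan y).contDiff) hK0 hKeuler hK · x y)

end Symmetry

theorem dunklKernel_properties_general {N : ℕ} (R Rp : Finset (Vec N))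
    (hR : IsRootSystem R) (hRp : IsPositiveSubsystem R Rp)
    (k : Vec N → ℝ) (hk : IsMultiplicity R (fun α => ((k α : ℝ) : ℂ)))
    (hk0 : ∀ α ∈ R, 0 ≤ k α)
    (E : Vec N → (Fin N → ℂ) → ℂ)
    (hE : IsDunklKernel (fun α => ((k α : ℝ) : ℂ)) Rp E) :
    (∀ x y : Vec N, E x (fun i => ((y i : ℝ) : ℂ)) = E y (fun i => ((x i : ℝ) : ℂ))) ∧
    (∀ (x y : Vec N) (lam : ℝ),
        E (lam • x) (fun i => ((y i : ℝ) : ℂ))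
          = E x (fun i => (((lam • y : Vec N) i : ℝ) : ℂ))) ∧
    (∀ (x y : Vec N), ∀ g ∈ reflGroup R,
        E (g x) (fun i => (((g y : Vec N) i : ℝ) : ℂ)) = E x (fun i => ((y i : ℝ) : ℂ))) ∧
    (∀ (x : Vec N) (y : Fin N → ℂ),
        (starRingEnd ℂ) (E x y) = E x (fun i => (starRingEnd ℂ) (y i))) := by
  have hkRp : ∀ α ∈ Rp, 0 ≤ k α := fun α hα => hk0 α (hRp.subset hα)
  have hEan : ∀ y, AnalyticOnNhd ℝ (E · y) Set.univ := fun y => analyticOn_univ.mp (hE y).1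
  have hEuler := hE.isEulerSolution fun α hα => hR.normalized α (hRp.subset hα)
  have hunique : ∀ {y f}, AnalyticOnNhd ℝ f Set.univ → IsEulerSolution k Rp y f → f 0 = 1 →
      ∀ x, f x = E x y := fun hf sf h0 x =>
    congrFun (sf.eq_of_map_zero_eq hkRp hf (hEan _) (hEuler _) (h0.trans (hE _).2.1.symm)) x
  have hinvariant : ∀ (x y : Vec N), ∀ g ∈ reflGroup R,
      E (g x) (ofRealVec (g y)) = E x (ofRealVec y) := fun x y g hg =>
    hunique ((hEan _).comp (g.toContinuousLinearEquiv.toContinuousLinearMap.analyticOnNhd _)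
        fun _ _ => trivial) ((hEuler _).comp_reflGroup hR hRp hk hg)
      (by simp [(hE _).2.1]) x
  refine ⟨symm_of_invariant hkRp hRp.subset (fun y => hEan _) (fun y => (hE _).2.1)
      (fun y => hEuler _) hinvariant, fun x y r => ?_, hinvariant, fun x y => ?_⟩
  · change E (r • x) (ofRealVec y) = E x (ofRealVec (r • y))
    rw [ofRealVec_smul]
    exact hunique ((hEan _).comp ((r • ContinuousLinearMap.id ℝ (Vec N)).analyticOnNhd _)
      fun _ _ => trivial) ((hEuler _).comp_smul r) (by simp [(hE _).2.1]) x
  · exact hunique ((Complex.conjCLE.toContinuousLinearMap.analyticOnNhd Set.univ).comp (hEan y)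
      fun _ _ => trivial) (hEuler y).conj (by simp [(hE y).2.1]) x

/-- Symmetry, homogeneity, `G`-equivariance and conjugation
properties of the Dunkl kernel (`k ≥ 0`). -/
theorem dunklKernel_properties {N : ℕ} (hN : 1 ≤ N) (R Rp : Finset (Vec N))
    (hR : IsRootSystem R) (hRp : IsPositiveSubsystem R Rp)
    (k : Vec N → ℝ) (hk : IsMultiplicity R (fun α => ((k α : ℝ) : ℂ)))
    (hk0 : ∀ α ∈ R, 0 ≤ k α)
    (E : Vec N → (Fin N → ℂ) → ℂ)
    (hE : IsDunklKernel (fun α => ((k α : ℝ) : ℂ)) Rp E) :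
    (∀ x y : Vec N, E x (fun i => ((y i : ℝ) : ℂ)) = E y (fun i => ((x i : ℝ) : ℂ))) ∧
    (∀ (x y : Vec N) (lam : ℝ),
        E (lam • x) (fun i => ((y i : ℝ) : ℂ))
          = E x (fun i => (((lam • y : Vec N) i : ℝ) : ℂ))) ∧
    (∀ (x y : Vec N), ∀ g ∈ reflGroup R,
        E (g x) (fun i => (((g y : Vec N) i : ℝ) : ℂ)) = E x (fun i => ((y i : ℝ) : ℂ))) ∧
    (∀ (x : Vec N) (y : Fin N → ℂ),
        (starRingEnd ℂ) (E x y) = E x (fun i => (starRingEnd ℂ) (y i))) :=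
  dunklKernel_properties_general R Rp hR hRp k hk hk0 E hE
end

section
/- (Positive minimum principle for degree-lowering operators) Let A be a degree-lowering linear operator on Π_ℝ, i.e. deg(Ap) < deg(p) for every nonzero p ∈ Π_ℝ (with deg 0 := −∞), so that e^{tA} := Σ_{n≥0} t^n A^n/n! is a well-defined linear operator on Π_ℝ for every t ≥ 0. Then the following are equivalent: (1) for every t ≥ 0, e^{tA} maps Π_+ into Π_+; (2) for every p ∈ Π_+ and every x₀ ∈ ℝ^N with p(x₀) = 0, one has (Ap)(x₀) ≥ 0. -/
open scoped RealInnerProductSpace BigOperators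
open MeasureTheory Filter

/-!
(⇒) If `p ≥ 0` vanishes at `x₀`, then `t ↦ (e^{tA} p)(x₀)` is nonnegative on `[0, ∞)` and
vanishes at `0`, so its derivative `(A p)(x₀)` at `0` is nonnegative.

(⇐) `u(t) = e^{tA} q` solves `u' = A u`. Perturb `p ≥ 0` to `q = p + ε r`, where `r` dominates
`(1 + ‖x‖)^(2 deg p + 2)`. Since `A` lowers degrees, `u(t) - ε r` has degree smaller than `r`,
uniformly for `t ∈ [0, T]`, so `u(t)` stays positive outside a compact set. At a first time where
`u(t) + δ eᵗ` touches zero, the positive minimum principle (`A` kills constants) makes its time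
derivative positive, which is impossible. Letting `δ, ε → 0` gives `e^{tA} p ≥ 0`.
-/

open MvPolynomial Finset Set Topology

section DegreeLowering

variable {σ R : Type*} [CommSemiring R]

def IsDegreeLowering (A : Module.End R (MvPolynomial σ R)) : Prop :=
  ∀ p : MvPolynomial σ R, p ≠ 0 → A p = 0 ∨ (A p).totalDegree < p.totalDegree

namespace IsDegreeLowering

variable {A : Module.End R (MvPolynomial σ R)}

theorem apply_eq_zero_of_totalDegree_eq_zero (hA : IsDegreeLowering A) {p : MvPolynomial σ R}
    (hp : p.totalDegree = 0) : A p = 0 := by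
  by_contra hAp
  have hp0 : p ≠ 0 := by rintro rfl; exact hAp (map_zero A)
  exact (hA p hp0).elim hAp (by omega)

theorem totalDegree_apply_le (hA : IsDegreeLowering A) (p : MvPolynomial σ R) :
    (A p).totalDegree ≤ p.totalDegree - 1 := by
  rcases eq_or_ne p 0 with rfl | hp0
  · simp
  rcases hA p hp0 with hAp | hlt
  · simp [hAp]
  · omega

theorem totalDegree_pow_apply_le (hA : IsDegreeLowering A) (n : ℕ) (p : MvPolynomial σ R) :
    ((A ^ n) p).totalDegree ≤ p.totalDegree - n := by
  induction n with
  | zero => simp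
  | succ n ih =>
    rw [pow_succ', Module.End.mul_apply]
    exact (hA.totalDegree_apply_le _).trans (by omega)

theorem pow_apply_eq_zero (hA : IsDegreeLowering A) {p : MvPolynomial σ R} {n : ℕ}
    (hn : p.totalDegree < n) : (A ^ n) p = 0 := by
  obtain ⟨k, rfl⟩ := Nat.exists_eq_add_of_lt hn
  rw [show p.totalDegree + k + 1 = k + 1 + p.totalDegree by omega, pow_add, pow_succ,
    Module.End.mul_apply, Module.End.mul_apply, hA.apply_eq_zero_of_totalDegree_eq_zero, map_zero]
  have := hA.totalDegree_pow_apply_le p.totalDegree p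
  omega

end IsDegreeLowering

end DegreeLowering

section TruncatedExponential

variable {V : Type*} [AddCommGroup V] [Module ℝ V]

noncomputable def truncExp (A : Module.End ℝ V) (M : ℕ) (t : ℝ) : Module.End ℝ V :=
  ∑ n ∈ range M, (t ^ n / n.factorial) • A ^ n

variable {A : Module.End ℝ V} {M : ℕ} {v : V}

theorem truncExp_apply (t : ℝ) (v : V) :
    truncExp A M t v = ∑ n ∈ range M, (t ^ n / n.factorial) • (A ^ n) v := by
  simp [truncExp, LinearMap.sum_apply]

theorem truncExp_apply_of_le {M' : ℕ} (hM : M ≤ M') (hv : (A ^ M) v = 0) (t : ℝ) :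
    truncExp A M' t v = truncExp A M t v := by
  rw [truncExp_apply, truncExp_apply]
  refine (sum_subset (range_subset_range.2 hM) fun n _ hn => ?_).symm
  obtain ⟨k, rfl⟩ := Nat.exists_eq_add_of_le (not_lt.1 (mem_range.not.1 hn))
  have hMk : (A ^ (M + k)) v = 0 := by rw [add_comm, pow_add, Module.End.mul_apply, hv, map_zero]
  rw [hMk, smul_zero]

theorem truncExp_zero_apply (hv : (A ^ M) v = 0) : truncExp A M 0 v = v := by
  cases M with
  | zero => simpa [truncExp] using hv.symm
  | succ M => simp [truncExp_apply, sum_range_succ']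

theorem commute_truncExp (t : ℝ) : Commute A (truncExp A M t) :=
  Commute.sum_right _ _ _ fun n _ => ((Commute.refl A).pow_right n).smul_right _

theorem apply_truncExp_apply (t : ℝ) (v : V) : A (truncExp A M t v) = truncExp A M t (A v) :=
  LinearMap.congr_fun (commute_truncExp t).eq v

theorem hasDerivAt_truncExp_apply {F : Type*} [NormedAddCommGroup F] [NormedSpace ℝ F]
    (φ : V →ₗ[ℝ] F) (hv : (A ^ M) v = 0) (t : ℝ) :
    HasDerivAt (fun s => φ (truncExp A M s v)) (φ (A (truncExp A M t v))) t := by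
  have hterm (n : ℕ) : HasDerivAt (fun s : ℝ => (s ^ n / n.factorial) • φ ((A ^ n) v))
      ((n * t ^ (n - 1) / n.factorial) • φ ((A ^ n) v)) t :=
    ((hasDerivAt_pow n t).div_const _).smul_const _
  convert HasDerivAt.sum fun n (_ : n ∈ range M) => hterm n using 1
  · ext s; simp [truncExp_apply]
  · rw [apply_truncExp_apply, truncExp_apply]
    cases M with
    | zero => simp
    | succ m =>
      simp only [← Module.End.mul_apply, ← pow_succ]
      rw [sum_range_succ, hv, smul_zero, add_zero, sum_range_succ', map_sum]
      simp only [map_smul, Nat.cast_zero, zero_mul, zero_div, zero_smul, add_zero,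
        Nat.add_sub_cancel, Nat.factorial_succ, Nat.cast_mul]
      refine sum_congr rfl fun k _ => ?_
      congr 1
      field_simp

end TruncatedExponential

section PolynomialBounds

variable {σ : Type*} [Fintype σ]

theorem abs_eval_le_sum_abs_coeff_mul {w : MvPolynomial σ ℝ} {m : ℕ} (hw : w.totalDegree ≤ m)
    (x : σ → ℝ) : |eval x w| ≤ (∑ a ∈ w.support, |w.coeff a|) * (1 + ‖x‖) ^ m := by
  rw [eval_eq, sum_mul]
  refine (abs_sum_le_sum_abs _ _).trans (sum_le_sum fun a ha => ?_)
  rw [abs_mul]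
  gcongr
  have hx : 1 ≤ 1 + ‖x‖ := le_add_of_nonneg_right (norm_nonneg x)
  calc |∏ i ∈ a.support, x i ^ a i| = ∏ i ∈ a.support, |x i| ^ a i := by
        simp only [abs_prod, abs_pow]
    _ ≤ ∏ i ∈ a.support, (1 + ‖x‖) ^ a i := by
        gcongr with i
        exact (norm_le_pi_norm x i).trans (le_add_of_nonneg_left zero_le_one)
    _ = (1 + ‖x‖) ^ (∑ i ∈ a.support, a i) := prod_pow_eq_pow_sum _ _ _
    _ ≤ (1 + ‖x‖) ^ m := pow_le_pow_right₀ hx ((le_totalDegree ha).trans hw)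

theorem one_add_norm_sq_le (x : σ → ℝ) : (1 + ‖x‖) ^ 2 ≤ 2 * (1 + ∑ i, x i ^ 2) := by
  have hnorm : ‖x‖ ≤ √(∑ i, x i ^ 2) :=
    (pi_norm_le_iff_of_nonneg (Real.sqrt_nonneg _)).2 fun i =>
      Real.abs_le_sqrt <|
        single_le_sum (f := fun j => x j ^ 2) (fun j _ => sq_nonneg _) (mem_univ i)
  have hsq : ‖x‖ ^ 2 ≤ ∑ i, x i ^ 2 :=
    (Real.le_sqrt (norm_nonneg x) (sum_nonneg fun i _ => sq_nonneg _)).1 hnorm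
  nlinarith [sq_nonneg (‖x‖ - 1)]

theorem exists_totalDegree_le_and_one_add_norm_pow_le_eval (k : ℕ) :
    ∃ r : MvPolynomial σ ℝ, r.totalDegree ≤ 2 * k ∧ ∀ x, (1 + ‖x‖) ^ (2 * k) ≤ eval x r := by
  have hdeg : (1 + ∑ i, X i ^ 2 : MvPolynomial σ ℝ).totalDegree ≤ 2 :=
    (totalDegree_add _ _).trans <| max_le (by simp) <|
      (totalDegree_finsetSum _ _).trans (Finset.sup_le fun i _ => by simp)
  refine ⟨(2 : ℝ) ^ k • (1 + ∑ i, X i ^ 2) ^ k, ?_, fun x => ?_⟩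
  · exact (totalDegree_smul_le _ _).trans ((totalDegree_pow _ _).trans (by nlinarith))
  · simp only [smul_eval, map_pow, map_add, map_one, map_sum, eval_X, pow_mul, ← mul_pow]
    exact pow_le_pow_left₀ (sq_nonneg _) (one_add_norm_sq_le x) k

end PolynomialBounds

section FirstTouching

theorem IsMinOn.mul_sub_nonneg_of_hasDerivAt {f : ℝ → ℝ} {a b d : ℝ}
    (h : IsMinOn f (segment ℝ a b) a) (hf : HasDerivAt f d a) : 0 ≤ d * (b - a) := by
  have hb : b - a ∈ posTangentConeAt (segment ℝ a b) a :=
    sub_mem_posTangentConeAt_of_segment_subset subset_rfl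
  simpa [mul_comm] using h.localize.hasFDerivWithinAt_nonneg hf.hasFDerivAt.hasFDerivWithinAt hb

theorem nonneg_of_forall_pos_nonneg_add_mul {a b : ℝ} (h : ∀ ε > 0, 0 ≤ a + ε * b) : 0 ≤ a := by
  have hlim : Filter.Tendsto (fun ε => a + ε * b) (𝓝[>] 0) (𝓝 a) := by
    have hcont : Continuous fun ε : ℝ => a + ε * b := by fun_prop
    simpa using (hcont.tendsto 0).mono_left nhdsWithin_le_nhds
  exact ge_of_tendsto hlim (eventually_nhdsWithin_of_forall h)

variable {X : Type*} [TopologicalSpace X] {F : ℝ → X → ℝ} {K : Set X} {T : ℝ}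

theorem exists_first_nonpos (hF : Continuous (Function.uncurry F)) (hK : IsCompact K)
    (hK_out : ∀ t ∈ Icc 0 T, ∀ x ∉ K, 0 < F t x) (hnonpos : ∃ t ∈ Icc 0 T, ∃ x, F t x ≤ 0) :
    ∃ t₀ ∈ Icc 0 T, ∃ x₀, F t₀ x₀ ≤ 0 ∧ ∀ s ∈ Ico 0 t₀, ∀ y, 0 < F s y := by
  set Z : Set (ℝ × X) := (Icc 0 T ×ˢ K) ∩ {z | F z.1 z.2 ≤ 0}
  have hZ : IsCompact Z := (isCompact_Icc.prod hK).inter_right (isClosed_le hF continuous_const)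
  have hmemZ : ∀ t ∈ Icc 0 T, ∀ x, F t x ≤ 0 → (t, x) ∈ Z := fun t ht x hx =>
    ⟨⟨ht, by_contra fun hxK => (hK_out t ht x hxK).not_ge hx⟩, hx⟩
  obtain ⟨t, ht, x, hx⟩ := hnonpos
  obtain ⟨⟨t₀, x₀⟩, ⟨⟨ht₀, -⟩, hx₀⟩, hmin⟩ :=
    hZ.exists_isMinOn ⟨_, hmemZ t ht x hx⟩ continuous_fst.continuousOn
  refine ⟨t₀, ht₀, x₀, hx₀, fun s hs y => lt_of_not_ge fun hy => ?_⟩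
  exact hs.2.not_ge (hmin (hmemZ s ⟨hs.1, hs.2.le.trans ht₀.2⟩ y hy))

theorem forall_pos_of_hasDerivAt_pos_at_zeros (hF : Continuous (Function.uncurry F))
    (hK : IsCompact K) (h0 : ∀ x, 0 < F 0 x) (hK_out : ∀ t ∈ Icc 0 T, ∀ x ∉ K, 0 < F t x)
    (hderiv : ∀ t ∈ Ioc 0 T, ∀ x, (∀ y, 0 ≤ F t y) → F t x = 0 →
      ∃ d > 0, HasDerivAt (F · x) d t) :
    ∀ t ∈ Icc 0 T, ∀ x, 0 < F t x := by
  by_contra! hnonpos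
  obtain ⟨t₀, ht₀, x₀, hx₀, hbefore⟩ := exists_first_nonpos hF hK hK_out hnonpos
  have ht₀_pos : 0 < t₀ := ht₀.1.lt_of_ne fun h => by
    rw [← h] at hx₀
    linarith [h0 x₀]
  have hnonneg (y : X) : 0 ≤ F t₀ y := by
    have hclosed : IsClosed {s | 0 ≤ F s y} :=
      isClosed_le continuous_const (hF.comp (continuous_id.prodMk continuous_const))
    have hIcc := hclosed.closure_subset_iff.2 fun s hs => (hbefore s hs y).le
    rw [closure_Ico ht₀_pos.ne] at hIcc
    exact hIcc (right_mem_Icc.2 ht₀.1 : t₀ ∈ Icc 0 t₀)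
  have hzero : F t₀ x₀ = 0 := le_antisymm hx₀ (hnonneg x₀)
  obtain ⟨d, hd, hder⟩ := hderiv t₀ ⟨ht₀_pos, ht₀.2⟩ x₀ hnonneg hzero
  have hmin : IsMinOn (F · x₀) (segment ℝ t₀ 0) t₀ := by
    rw [segment_symm, segment_eq_Icc ht₀.1]
    intro s (hs : s ∈ Icc 0 t₀)
    show F t₀ x₀ ≤ F s x₀
    rcases eq_or_lt_of_le hs.2 with rfl | hlt
    · exact le_rfl
    · exact hzero.trans_le (hbefore s ⟨hs.1, hlt⟩ x₀).le
  have := hmin.mul_sub_nonneg_of_hasDerivAt hder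
  nlinarith

end FirstTouching

section PositiveMinimumPrinciple

variable {σ : Type*} {A : Module.End ℝ (MvPolynomial σ ℝ)}

def PositiveMinimumPrinciple (A : Module.End ℝ (MvPolynomial σ ℝ)) : Prop :=
  ∀ p : MvPolynomial σ ℝ, (∀ x, 0 ≤ eval x p) → ∀ x₀, eval x₀ p = 0 → 0 ≤ eval x₀ (A p)

theorem continuous_eval_truncExp (A : Module.End ℝ (MvPolynomial σ ℝ)) (M : ℕ)
    (q : MvPolynomial σ ℝ) :
    Continuous fun z : ℝ × (σ → ℝ) => eval z.2 (truncExp A M z.1 q) := by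
  simp only [truncExp_apply, map_sum, smul_eval]
  exact continuous_finsetSum _ fun n _ =>
    ((continuous_fst.pow n).div_const _).mul ((continuous_eval _).comp continuous_snd)

theorem IsDegreeLowering.positiveMinimumPrinciple_of_nonneg_truncExp (hA : IsDegreeLowering A)
    (hpos : ∀ t : ℝ, 0 ≤ t → ∀ p : MvPolynomial σ ℝ, (∀ x, 0 ≤ eval x p) →
      ∀ x, 0 ≤ eval x (truncExp A (p.totalDegree + 1) t p)) :
    PositiveMinimumPrinciple A := by
  intro p hp x₀ hx₀
  have hM := hA.pow_apply_eq_zero (lt_add_one p.totalDegree)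
  have hder := hasDerivAt_truncExp_apply (aeval x₀).toLinearMap hM 0
  have hmin : IsMinOn (fun t => (aeval x₀).toLinearMap (truncExp A (p.totalDegree + 1) t p))
      (segment ℝ 0 1) 0 := by
    rw [segment_eq_Icc zero_le_one]
    intro t (ht : t ∈ Set.Icc 0 1)
    simpa [truncExp_zero_apply hM, hx₀] using hpos t ht.1 p hp x₀
  simpa [truncExp_zero_apply hM] using hmin.mul_sub_nonneg_of_hasDerivAt hder

theorem IsDegreeLowering.eval_truncExp_nonneg_of_isCompact (hA : IsDegreeLowering A)
    (hPMP : PositiveMinimumPrinciple A) {q : MvPolynomial σ ℝ} {M : ℕ} {T : ℝ}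
    {K : Set (σ → ℝ)} (hq : ∀ x, 0 ≤ eval x q) (hM : (A ^ M) q = 0) (hK : IsCompact K)
    (hK_out : ∀ t ∈ Icc 0 T, ∀ x ∉ K, 0 < eval x (truncExp A M t q)) :
    ∀ t ∈ Icc 0 T, ∀ x, 0 ≤ eval x (truncExp A M t q) := by
  intro t ht x
  refine nonneg_of_forall_pos_nonneg_add_mul (b := Real.exp t) fun δ hδ => ?_
  -- the term `δ eˢ` makes the time derivative strictly positive at a first zero
  set F : ℝ → (σ → ℝ) → ℝ := fun s y => eval y (truncExp A M s q) + δ * Real.exp s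
  have hF : Continuous (Function.uncurry F) :=
    (continuous_eval_truncExp A M q).add (continuous_const.mul (by fun_prop))
  refine (forall_pos_of_hasDerivAt_pos_at_zeros hF hK (fun y => ?_) (fun s hs y hy => ?_)
    (fun s _ y hnonneg hzero => ?_) t ht x).le
  · have := hq y
    simp only [F, truncExp_zero_apply hM, Real.exp_zero]
    positivity
  · have := hK_out s hs y hy
    positivity
  refine ⟨eval y (A (truncExp A M s q)) + δ * Real.exp s, ?_, ?_⟩
  · have hAC : A (C (δ * Real.exp s)) = 0 :=
      hA.apply_eq_zero_of_totalDegree_eq_zero (totalDegree_C _)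
    have := hPMP (truncExp A M s q + C (δ * Real.exp s)) (by simpa [F] using hnonneg) y
      (by simpa [F] using hzero)
    rw [map_add, hAC, add_zero] at this
    positivity
  · exact (hasDerivAt_truncExp_apply (aeval y).toLinearMap hM s).add
      ((Real.hasDerivAt_exp s).const_mul δ)

variable [Fintype σ]

theorem IsDegreeLowering.exists_isCompact_forall_notMem_pos_eval_truncExp
    (hA : IsDegreeLowering A) {p r : MvPolynomial σ ℝ} {m : ℕ} {c : ℝ} (hc : 0 < c)
    (hp : p.totalDegree ≤ m) (hr : r.totalDegree ≤ m + 1)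
    (hr_ge : ∀ x, c * (1 + ‖x‖) ^ (m + 1) ≤ eval x r) (M : ℕ) (T : ℝ) :
    ∃ K : Set (σ → ℝ), IsCompact K ∧
      ∀ t ∈ Icc 0 T, ∀ x ∉ K, 0 < eval x (truncExp A (M + 1) t (p + r)) := by
  set g : ℕ → MvPolynomial σ ℝ := fun n => if n = 0 then p else (A ^ n) (p + r)
  have hg (n : ℕ) : (g n).totalDegree ≤ m := by
    rcases n with _ | n
    · simpa [g] using hp
    · have := hA.totalDegree_pow_apply_le (n + 1) (p + r)
      have := totalDegree_add p r
      show ((A ^ (n + 1)) (p + r)).totalDegree ≤ m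
      omega
  have hsplit (t : ℝ) (x : σ → ℝ) : eval x (truncExp A (M + 1) t (p + r)) =
      eval x r + ∑ n ∈ range (M + 1), t ^ n / n.factorial * eval x (g n) := by
    rw [truncExp_apply, map_sum, sum_range_succ', sum_range_succ']
    simp [g, smul_eval, mul_add, sum_add_distrib]
    ring
  set B := ∑ n ∈ range (M + 1), T ^ n / n.factorial * ∑ a ∈ (g n).support, |(g n).coeff a|
  have hbound : ∀ t ∈ Icc 0 T, ∀ x,
      |∑ n ∈ range (M + 1), t ^ n / n.factorial * eval x (g n)| ≤ B * (1 + ‖x‖) ^ m := by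
    intro t ht x
    rw [sum_mul]
    refine (abs_sum_le_sum_abs _ _).trans (sum_le_sum fun n _ => ?_)
    rw [abs_mul, abs_of_nonneg (by have := ht.1; positivity), mul_assoc]
    have hT : 0 ≤ T := ht.1.trans ht.2
    refine mul_le_mul ?_ (abs_eval_le_sum_abs_coeff_mul (hg n) x) (abs_nonneg _) (by positivity)
    gcongr
    exacts [ht.1, ht.2]
  refine ⟨Metric.closedBall 0 (B / c), isCompact_closedBall _ _, fun t ht x hx => ?_⟩
  rw [Metric.mem_closedBall, dist_zero_right, not_le, div_lt_iff₀ hc] at hx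
  have hB : B * (1 + ‖x‖) ^ m < c * (1 + ‖x‖) ^ (m + 1) := by
    rw [pow_succ, mul_comm ((1 + ‖x‖) ^ m), ← mul_assoc]
    exact mul_lt_mul_of_pos_right (by linarith [norm_nonneg x]) (by positivity)
  rw [hsplit]
  linarith [abs_le.1 (hbound t ht x), hr_ge x]

theorem IsDegreeLowering.eval_truncExp_nonneg (hA : IsDegreeLowering A)
    (hPMP : PositiveMinimumPrinciple A) {p : MvPolynomial σ ℝ} (hp : ∀ x, 0 ≤ eval x p) {t : ℝ}
    (ht : 0 ≤ t) (x : σ → ℝ) : 0 ≤ eval x (truncExp A (p.totalDegree + 1) t p) := by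
  set D := p.totalDegree
  obtain ⟨r, hr_deg, hr_ge⟩ :=
    exists_totalDegree_le_and_one_add_norm_pow_le_eval (σ := σ) (D + 1)
  rw [← truncExp_apply_of_le (M' := 2 * D + 3) (by omega)
    (hA.pow_apply_eq_zero (lt_add_one D))]
  refine nonneg_of_forall_pos_nonneg_add_mul (b := eval x (truncExp A (2 * D + 3) t r))
    fun ε hε => ?_
  -- perturbing by `ε r` makes the solution positive outside a compact set
  have hεr_deg : (ε • r).totalDegree ≤ 2 * D + 1 + 1 := (totalDegree_smul_le _ _).trans hr_deg
  have hεr_ge (y : σ → ℝ) : ε * (1 + ‖y‖) ^ (2 * D + 1 + 1) ≤ eval y (ε • r) := by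
    rw [smul_eval]
    exact mul_le_mul_of_nonneg_left (hr_ge y) hε.le
  obtain ⟨K, hK, hK_out⟩ := hA.exists_isCompact_forall_notMem_pos_eval_truncExp hε
    (by omega : D ≤ 2 * D + 1) hεr_deg hεr_ge (2 * D + 2) t
  have hq (y : σ → ℝ) : 0 ≤ eval y (p + ε • r) := by
    rw [map_add]
    exact add_nonneg (hp y) ((mul_nonneg hε.le (by positivity)).trans (hεr_ge y))
  have hM : (A ^ (2 * D + 3)) (p + ε • r) = 0 :=
    hA.pow_apply_eq_zero ((totalDegree_add _ _).trans_lt (max_lt (by omega) (by omega)))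
  simpa [smul_eval] using
    hA.eval_truncExp_nonneg_of_isCompact hPMP hq hM hK hK_out t ⟨ht, le_rfl⟩ x

end PositiveMinimumPrinciple

theorem expA_positive_iff_positive_minimum_principle_general {N : ℕ}
    (A : Module.End ℝ (MvPolynomial (Fin N) ℝ))
    (hA : ∀ p : MvPolynomial (Fin N) ℝ, p ≠ 0 →
        A p = 0 ∨ (A p).totalDegree < p.totalDegree)
    (expA : ℝ → MvPolynomial (Fin N) ℝ → MvPolynomial (Fin N) ℝ)
    (hexpA : ∀ (t : ℝ) (p : MvPolynomial (Fin N) ℝ),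
        expA t p = ∑ n ∈ Finset.range (p.totalDegree + 1),
          (t ^ n / (n.factorial : ℝ)) • ((A ^ n) p)) :
    (∀ t : ℝ, 0 ≤ t → ∀ p : MvPolynomial (Fin N) ℝ,
        (∀ x : Fin N → ℝ, 0 ≤ MvPolynomial.eval x p) →
        ∀ x : Fin N → ℝ, 0 ≤ MvPolynomial.eval x (expA t p)) ↔
    (∀ p : MvPolynomial (Fin N) ℝ, (∀ x : Fin N → ℝ, 0 ≤ MvPolynomial.eval x p) →
        ∀ x₀ : Fin N → ℝ, MvPolynomial.eval x₀ p = 0 →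
          0 ≤ MvPolynomial.eval x₀ (A p)) := by
  have hexp (t : ℝ) (p : MvPolynomial (Fin N) ℝ) :
      expA t p = truncExp A (p.totalDegree + 1) t p := by
    rw [hexpA, truncExp_apply]
  constructor
  · intro hpos
    exact IsDegreeLowering.positiveMinimumPrinciple_of_nonneg_truncExp hA fun t ht p hp x =>
      hexp t p ▸ hpos t ht p hp x
  · intro hPMP t ht p hp x
    rw [hexp]
    exact IsDegreeLowering.eval_truncExp_nonneg hA hPMP hp ht x

/-- (Positive minimum principle for degree-lowering operators)
Let `A` be a degree-lowering linear operator on the real polynomials, so that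
`e^{tA}` is defined on each polynomial by a terminating power series. Then `e^{tA}`
is positivity-preserving for all `t ≥ 0` iff `A` satisfies the positive minimum
principle: `p ≥ 0` and `p(x₀) = 0` imply `(Ap)(x₀) ≥ 0`. -/
theorem expA_positive_iff_positive_minimum_principle {N : ℕ} (hN : 1 ≤ N)
    (A : Module.End ℝ (MvPolynomial (Fin N) ℝ))
    (hA : ∀ p : MvPolynomial (Fin N) ℝ, p ≠ 0 →
        A p = 0 ∨ (A p).totalDegree < p.totalDegree)
    (expA : ℝ → MvPolynomial (Fin N) ℝ → MvPolynomial (Fin N) ℝ)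
    (hexpA : ∀ (t : ℝ) (p : MvPolynomial (Fin N) ℝ),
        expA t p = ∑ n ∈ Finset.range (p.totalDegree + 1),
          (t ^ n / (n.factorial : ℝ)) • ((A ^ n) p)) :
    (∀ t : ℝ, 0 ≤ t → ∀ p : MvPolynomial (Fin N) ℝ,
        (∀ x : Fin N → ℝ, 0 ≤ MvPolynomial.eval x p) →
        ∀ x : Fin N → ℝ, 0 ≤ MvPolynomial.eval x (expA t p)) ↔
    (∀ p : MvPolynomial (Fin N) ℝ, (∀ x : Fin N → ℝ, 0 ≤ MvPolynomial.eval x p) →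
        ∀ x₀ : Fin N → ℝ, MvPolynomial.eval x₀ p = 0 →
          0 ≤ MvPolynomial.eval x₀ (A p)) :=
  expA_positive_iff_positive_minimum_principle_general A hA expA hexpA
end
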